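/- arXiv:1907.02390 — 2 statements merged into one kernel-verified Lean document; each statement's English description precedes it below -/
import Mathlib

section
/- For every real n > 0, the iterated integral ∫_{r₁=0}^{∞} ∫_{r₂=r₁}^{∞} ∫_{r₃=r₁+2r₂}^{∞} (r₃ − (3/2)r₁ − (3/2)r₂) · e^{−nπr₃²} · r₁ r₂ r₃ dr₃ dr₂ dr₁ equals 19/(27648 π³ n^{7/2}). -/
open MeasureTheory Real Set Filter Topology

noncomputable def Efun (k x : ℝ) : ℝ := ∫ t in Set.Ioi x, Real.exp (-(k * t ^ 2))

lemma gauss_int {k : ℝ} (hk : 0 < k) :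
    Integrable (fun t : ℝ => Real.exp (-(k * t ^ 2))) := by
  simpa [neg_mul] using integrable_exp_neg_mul_sq hk

lemma E_split {k : ℝ} (hk : 0 < k) {a b : ℝ} (hab : a ≤ b) :
    Efun k a = (∫ t in Set.Ioc a b, Real.exp (-(k * t ^ 2))) + Efun k b := by
  rw [Efun, ← Set.Ioc_union_Ioi_eq_Ioi hab,
    setIntegral_union Set.Ioc_disjoint_Ioi_same measurableSet_Ioi
      (gauss_int hk).integrableOn (gauss_int hk).integrableOn]
  rfl

lemma E_eq {k : ℝ} (hk : 0 < k) (x : ℝ) :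
    Efun k x = Efun k 0 - ∫ t in (0:ℝ)..x, Real.exp (-(k * t ^ 2)) := by
  rcases le_total 0 x with h | h
  · rw [E_split hk h, intervalIntegral.integral_of_le h]
    ring
  · rw [E_split hk h (a := x), intervalIntegral.integral_symm,
      intervalIntegral.integral_of_le h]
    ring

lemma hasDerivAt_E {k : ℝ} (hk : 0 < k) (x : ℝ) :
    HasDerivAt (Efun k) (-Real.exp (-(k * x ^ 2))) x := by
  have hcont : Continuous fun t : ℝ => Real.exp (-(k * t ^ 2)) := by continuity
  have h1 : HasDerivAt (fun y : ℝ => ∫ t in (0:ℝ)..y, Real.exp (-(k * t ^ 2)))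
      (Real.exp (-(k * x ^ 2))) x :=
    intervalIntegral.integral_hasDerivAt_right (hcont.intervalIntegrable _ _)
      (hcont.stronglyMeasurableAtFilter _ _) hcont.continuousAt
  have : Efun k = fun y => Efun k 0 - ∫ t in (0:ℝ)..y, Real.exp (-(k * t ^ 2)) :=
    funext (E_eq hk)
  rw [this]
  simpa using h1.const_sub (Efun k 0)

lemma E_nonneg (k x : ℝ) : 0 ≤ Efun k x :=
  setIntegral_nonneg measurableSet_Ioi fun t _ => (Real.exp_pos _).le

lemma E_zero {k : ℝ} (hk : 0 < k) : Efun k 0 = Real.sqrt (π / k) / 2 := by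
  rw [Efun, ← integral_gaussian_Ioi k]
  congr 1; ext t; rw [neg_mul]

lemma integral_exp_neg_mul_Ioi {k : ℝ} (hk : 0 < k) (a : ℝ) :
    ∫ t in Set.Ioi a, Real.exp (-(k * t)) = Real.exp (-(k * a)) / k := by
  have hd : ∀ x ∈ Set.Ici a, HasDerivAt (fun t => -Real.exp (-(k * t)) / k)
      (Real.exp (-(k * x))) x := by
    intro x _
    have h1 : HasDerivAt (fun t : ℝ => -(k * t)) (-k) x := by
      exact ((hasDerivAt_id x).const_mul k).neg.congr_deriv (by simp)
    have h2 := (h1.exp.div_const k).neg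
    have hk' : k ≠ 0 := hk.ne'
    rw [show (fun t => -Real.exp (-(k * t)) / k) = -fun t => Real.exp (-(k * t)) / k by
      ext t; simp [neg_div]]
    refine h2.congr_deriv ?_
    · rw [mul_neg, neg_div, neg_neg, mul_div_assoc, div_self hk', mul_one]
  have hlim : Tendsto (fun t : ℝ => -(k * t)) atTop atBot := by
    apply tendsto_neg_atBot_iff.mpr
    exact Tendsto.const_mul_atTop hk tendsto_id
  have ht : Tendsto (fun t => -Real.exp (-(k * t)) / k) atTop (𝓝 0) := by
    have := (Real.tendsto_exp_atBot.comp hlim).neg.div_const k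
    simpa using this
  have := integral_Ioi_of_hasDerivAt_of_nonneg' hd (fun x _ => (Real.exp_pos _).le) ht
  rw [this]
  ring

lemma E_le {k : ℝ} (hk : 0 < k) {x : ℝ} (hx : 1 ≤ x) :
    Efun k x ≤ Real.exp (-(k * x)) / k := by
  have h1 : Efun k x ≤ ∫ t in Set.Ioi x, Real.exp (-(k * t)) := by
    apply setIntegral_mono_on (gauss_int hk).integrableOn
      (by simpa [neg_mul] using exp_neg_integrableOn_Ioi x hk) measurableSet_Ioi
    intro t ht
    apply Real.exp_le_exp.2
    have hxt : x < t := ht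
    have h1t : 1 ≤ t := le_trans hx hxt.le
    nlinarith [mul_le_mul_of_nonneg_left (by nlinarith : t ≤ t ^ 2) hk.le]
  rw [integral_exp_neg_mul_Ioi hk x] at h1
  exact h1

lemma tendsto_pow_exp (m : ℕ) {a : ℝ} (ha : 0 < a) :
    Tendsto (fun x : ℝ => x ^ m * Real.exp (-(a * x))) atTop (𝓝 0) := by
  have h := tendsto_pow_mul_exp_neg_atTop_nhds_zero m
  have hc : Tendsto (fun x : ℝ => a * x) atTop atTop :=
    Tendsto.const_mul_atTop ha tendsto_id
  have h2 := (h.comp hc).const_mul ((1 / a) ^ m)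
  rw [mul_zero] at h2
  refine h2.congr fun x => ?_
  simp only [Function.comp, id]
  rw [← mul_assoc, ← mul_pow]
  have ha' : a ≠ 0 := ha.ne'
  have hx : 1 / a * (a * x) = x := by field_simp
  rw [hx]

lemma tendsto_gauss (m : ℕ) {k d : ℝ} (c : ℝ) (hk : 0 < k) (hd : 0 < d) :
    Tendsto (fun x : ℝ => x ^ m * Real.exp (-(k * (c + d * x) ^ 2))) atTop (𝓝 0) := by
  have hg : Tendsto (fun x : ℝ => Real.exp (-(k * c)) * (x ^ m * Real.exp (-(k * d * x))))
      atTop (𝓝 0) := by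
    have := (tendsto_pow_exp m (mul_pos hk hd)).const_mul (Real.exp (-(k * c)))
    simpa [mul_assoc] using this
  apply squeeze_zero' _ _ hg
  · filter_upwards [eventually_ge_atTop (0 : ℝ)] with x h0
    positivity
  · filter_upwards [eventually_ge_atTop (0 : ℝ), eventually_ge_atTop ((1 - c) / d)]
      with x h0 h1
    have hcd : 1 ≤ c + d * x := by
      have := (div_le_iff₀ hd).mp h1
      nlinarith
    have hb : Real.exp (-(k * (c + d * x) ^ 2)) ≤ Real.exp (-(k * c)) * Real.exp (-(k * d * x)) := by
      rw [← Real.exp_add]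
      apply Real.exp_le_exp.2
      nlinarith [mul_le_mul_of_nonneg_left (by nlinarith : c + d * x ≤ (c + d * x) ^ 2) hk.le]
    calc x ^ m * Real.exp (-(k * (c + d * x) ^ 2))
        ≤ x ^ m * (Real.exp (-(k * c)) * Real.exp (-(k * d * x))) := by
          apply mul_le_mul_of_nonneg_left hb (by positivity)
      _ = Real.exp (-(k * c)) * (x ^ m * Real.exp (-(k * d * x))) := by ring

lemma tendsto_Egauss (m : ℕ) {k d : ℝ} (c : ℝ) (hk : 0 < k) (hd : 0 < d) :
    Tendsto (fun x : ℝ => x ^ m * Efun k (c + d * x)) atTop (𝓝 0) := by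
  have hg : Tendsto (fun x : ℝ => (Real.exp (-(k * c)) / k) * (x ^ m * Real.exp (-(k * d * x))))
      atTop (𝓝 0) := by
    have := (tendsto_pow_exp m (mul_pos hk hd)).const_mul (Real.exp (-(k * c)) / k)
    simpa [mul_assoc] using this
  apply squeeze_zero' _ _ hg
  · filter_upwards [eventually_ge_atTop (0 : ℝ)] with x h0
    have := E_nonneg k (c + d * x)
    positivity
  · filter_upwards [eventually_ge_atTop (0 : ℝ), eventually_ge_atTop ((1 - c) / d)]
      with x h0 h1
    have hcd : 1 ≤ c + d * x := by
      have := (div_le_iff₀ hd).mp h1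
      nlinarith
    have hb : Efun k (c + d * x) ≤ Real.exp (-(k * c)) * Real.exp (-(k * d * x)) / k := by
      calc Efun k (c + d * x) ≤ Real.exp (-(k * (c + d * x))) / k := E_le hk hcd
        _ = Real.exp (-(k * c)) * Real.exp (-(k * d * x)) / k := by
            rw [← Real.exp_add]; congr 2; ring
    calc x ^ m * Efun k (c + d * x)
        ≤ x ^ m * (Real.exp (-(k * c)) * Real.exp (-(k * d * x)) / k) := by
          apply mul_le_mul_of_nonneg_left hb (by positivity)
      _ = (Real.exp (-(k * c)) / k) * (x ^ m * Real.exp (-(k * d * x))) := by ring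

lemma hasDerivAt_gauss {f : ℝ → ℝ} {f' x : ℝ} (k : ℝ) (hf : HasDerivAt f f' x) :
    HasDerivAt (fun r => Real.exp (-(k * f r ^ 2)))
      (-(2 * k * f' * f x) * Real.exp (-(k * f x ^ 2))) x := by
  have h2 : HasDerivAt (fun r => -(k * f r ^ 2)) (-(2 * k * f' * f x)) x := by
    have := ((hf.pow 2).const_mul k).neg
    refine this.congr_deriv ?_
    push_cast
    ring
  have h3 := h2.exp
  convert h3 using 1
  ring

lemma hasDerivAt_E_comp {k : ℝ} (hk : 0 < k) {f : ℝ → ℝ} {f' x : ℝ}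
    (hf : HasDerivAt f f' x) :
    HasDerivAt (fun r => Efun k (f r)) (-f' * Real.exp (-(k * f x ^ 2))) x := by
  have h := (hasDerivAt_E hk (f x)).comp x hf
  have he : (Efun k ∘ f) = fun r => Efun k (f r) := rfl
  rw [he] at h
  refine h.congr_deriv ?_
  ring

lemma stage1 {k : ℝ} (hk : 0 < k) {r₁ r₂ : ℝ} (h1 : 0 < r₁) (h12 : r₁ < r₂) :
    (∫ r₃ in Set.Ioi (r₁ + 2 * r₂),
        (r₃ - 3 / 2 * r₁ - 3 / 2 * r₂) * Real.exp (-(k * r₃ ^ 2)) * (r₁ * r₂ * r₃))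
      = r₁ * r₂ * ((r₂ - r₁) / (4 * k) * Real.exp (-(k * (r₁ + 2 * r₂) ^ 2))
          + Efun k (r₁ + 2 * r₂) / (2 * k)) := by
  have hk' : k ≠ 0 := hk.ne'
  set F : ℝ → ℝ := fun r =>
    r₁ * r₂ * ((3 / 2 * r₁ + 3 / 2 * r₂ - r) / (2 * k) * Real.exp (-(k * r ^ 2))
      - Efun k r / (2 * k)) with hF
  have hderiv : ∀ x ∈ Set.Ici (r₁ + 2 * r₂), HasDerivAt F
      ((x - 3 / 2 * r₁ - 3 / 2 * r₂) * Real.exp (-(k * x ^ 2)) * (r₁ * r₂ * x)) x := by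
    intro x _
    have hid : HasDerivAt (fun r : ℝ => r) 1 x := hasDerivAt_id x
    have hg : HasDerivAt (fun r : ℝ => Real.exp (-(k * r ^ 2)))
        (-(2 * k * 1 * x) * Real.exp (-(k * x ^ 2))) x := hasDerivAt_gauss k hid
    have hE : HasDerivAt (fun r : ℝ => Efun k r) (-1 * Real.exp (-(k * x ^ 2))) x :=
      hasDerivAt_E_comp hk hid
    have hlin : HasDerivAt (fun r : ℝ => (3 / 2 * r₁ + 3 / 2 * r₂ - r) / (2 * k))
        (-1 / (2 * k)) x := by
      simpa using ((hasDerivAt_id x).const_sub (3 / 2 * r₁ + 3 / 2 * r₂)).div_const (2 * k)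
    have key := ((hlin.mul hg).sub (hE.div_const (2 * k))).const_mul (r₁ * r₂)
    refine key.congr_deriv ?_
    field_simp
    ring
  have hpos : ∀ x ∈ Set.Ioi (r₁ + 2 * r₂),
      0 ≤ (x - 3 / 2 * r₁ - 3 / 2 * r₂) * Real.exp (-(k * x ^ 2)) * (r₁ * r₂ * x) := by
    intro x hx
    have hx' : r₁ + 2 * r₂ < x := hx
    have e1 : 0 ≤ x - 3 / 2 * r₁ - 3 / 2 * r₂ := by nlinarith
    have hr₂ : 0 < r₂ := h1.trans h12
    have hx0 : 0 < x := by linarith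
    have e2 : 0 ≤ r₁ * r₂ * x := by positivity
    exact mul_nonneg (mul_nonneg e1 (Real.exp_pos _).le) e2
  have htend : Tendsto F atTop (𝓝 0) := by
    have g0 := tendsto_gauss 0 (0 : ℝ) hk one_pos
    have g1 := tendsto_gauss 1 (0 : ℝ) hk one_pos
    have e0 := tendsto_Egauss 0 (0 : ℝ) hk one_pos
    simp only [pow_zero, pow_one, one_mul, zero_add] at g0 g1 e0
    have comb := ((g0.const_mul (r₁ * r₂ * (3 / 2 * r₁ + 3 / 2 * r₂) / (2 * k))).sub
      (g1.const_mul (r₁ * r₂ / (2 * k)))).sub (e0.const_mul (r₁ * r₂ / (2 * k)))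
    norm_num at comb
    refine comb.congr fun r => ?_
    rw [hF]
    ring
  have := integral_Ioi_of_hasDerivAt_of_nonneg' hderiv hpos htend
  rw [this, hF]
  field_simp
  ring

lemma A_nonneg {k : ℝ} (hk : 0 < k) {r₁ y : ℝ} (h1 : 0 < r₁) (hy : r₁ < y) :
    0 ≤ r₁ * y * ((y - r₁) / (4 * k) * Real.exp (-(k * (r₁ + 2 * y) ^ 2))
        + Efun k (r₁ + 2 * y) / (2 * k)) := by
  have hE := E_nonneg k (r₁ + 2 * y)
  have he := (Real.exp_pos (-(k * (r₁ + 2 * y) ^ 2))).le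
  have hy0 : 0 < y := h1.trans hy
  apply mul_nonneg (by positivity)
  apply add_nonneg
  · apply mul_nonneg (div_nonneg (by linarith) (by linarith)) he
  · exact div_nonneg hE (by linarith)

lemma stage2 {k : ℝ} (hk : 0 < k) {r₁ : ℝ} (h1 : 0 < r₁) :
    (∫ r₂ in Set.Ioi r₁, r₁ * r₂ * ((r₂ - r₁) / (4 * k) * Real.exp (-(k * (r₁ + 2 * r₂) ^ 2))
        + Efun k (r₁ + 2 * r₂) / (2 * k)))
      = r₁ ^ 2 / (64 * k ^ 2) * Real.exp (-(k * (3 * r₁) ^ 2))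
        + (3 * r₁ / (64 * k ^ 2) - 3 * r₁ ^ 3 / (32 * k)) * Efun k (3 * r₁) := by
  have hk' : k ≠ 0 := hk.ne'
  set G : ℝ → ℝ := fun r =>
    (-3 * r₁ / (32 * k ^ 2) * r + 5 * r₁ ^ 2 / (64 * k ^ 2)) * Real.exp (-(k * (r₁ + 2 * r) ^ 2))
      + (r₁ * r ^ 2 / (4 * k) - 3 * r₁ / (64 * k ^ 2) - 5 * r₁ ^ 3 / (32 * k))
        * Efun k (r₁ + 2 * r) with hG
  have hderiv : ∀ x ∈ Set.Ici r₁, HasDerivAt G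
      (r₁ * x * ((x - r₁) / (4 * k) * Real.exp (-(k * (r₁ + 2 * x) ^ 2))
        + Efun k (r₁ + 2 * x) / (2 * k))) x := by
    intro x _
    have haff : HasDerivAt (fun r : ℝ => r₁ + 2 * r) 2 x := by
      simpa using ((hasDerivAt_id x).const_mul 2).const_add r₁
    have hg : HasDerivAt (fun r : ℝ => Real.exp (-(k * (r₁ + 2 * r) ^ 2)))
        (-(2 * k * 2 * (r₁ + 2 * x)) * Real.exp (-(k * (r₁ + 2 * x) ^ 2))) x :=
      hasDerivAt_gauss k haff
    have hE : HasDerivAt (fun r : ℝ => Efun k (r₁ + 2 * r))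
        (-2 * Real.exp (-(k * (r₁ + 2 * x) ^ 2))) x := hasDerivAt_E_comp hk haff
    have hp1 : HasDerivAt (fun r : ℝ => -3 * r₁ / (32 * k ^ 2) * r + 5 * r₁ ^ 2 / (64 * k ^ 2))
        (-3 * r₁ / (32 * k ^ 2)) x := by
      simpa using ((hasDerivAt_id x).const_mul (-3 * r₁ / (32 * k ^ 2))).add_const
        (5 * r₁ ^ 2 / (64 * k ^ 2))
    have hp2 : HasDerivAt (fun r : ℝ =>
        r₁ * r ^ 2 / (4 * k) - 3 * r₁ / (64 * k ^ 2) - 5 * r₁ ^ 3 / (32 * k))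
        (r₁ * (2 * x) / (4 * k)) x := by
      have := ((((hasDerivAt_pow 2 x).const_mul r₁).div_const (4 * k)).sub_const
        (3 * r₁ / (64 * k ^ 2))).sub_const (5 * r₁ ^ 3 / (32 * k))
      refine this.congr_deriv ?_
      push_cast
      ring
    have key := (hp1.mul hg).add (hp2.mul hE)
    refine key.congr_deriv ?_
    field_simp
    ring
  have hpos : ∀ x ∈ Set.Ioi r₁,
      0 ≤ r₁ * x * ((x - r₁) / (4 * k) * Real.exp (-(k * (r₁ + 2 * x) ^ 2))
        + Efun k (r₁ + 2 * x) / (2 * k)) := fun x hx => A_nonneg hk h1 hx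
  have htend : Tendsto G atTop (𝓝 0) := by
    have g0 := tendsto_gauss 0 r₁ hk two_pos
    have g1 := tendsto_gauss 1 r₁ hk two_pos
    have e0 := tendsto_Egauss 0 r₁ hk two_pos
    have e2 := tendsto_Egauss 2 r₁ hk two_pos
    simp only [pow_zero, pow_one, one_mul] at g0 g1 e0 e2
    have comb := (((g1.const_mul (-3 * r₁ / (32 * k ^ 2))).add
      (g0.const_mul (5 * r₁ ^ 2 / (64 * k ^ 2)))).add
      ((e2.const_mul (r₁ / (4 * k))).add
        (e0.const_mul (-(3 * r₁ / (64 * k ^ 2)) - 5 * r₁ ^ 3 / (32 * k)))))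
    norm_num at comb
    refine comb.congr fun r => ?_
    rw [hG]
    ring
  have := integral_Ioi_of_hasDerivAt_of_nonneg' hderiv hpos htend
  rw [this, hG]
  beta_reduce
  rw [show r₁ + 2 * r₁ = 3 * r₁ by ring]
  field_simp
  ring

lemma stage3 {k : ℝ} (hk : 0 < k) :
    (∫ x in Set.Ioi (0 : ℝ), (x ^ 2 / (64 * k ^ 2) * Real.exp (-(k * (3 * x) ^ 2))
        + (3 * x / (64 * k ^ 2) - 3 * x ^ 3 / (32 * k)) * Efun k (3 * x)))
      = 19 / (13824 * k ^ 3) * (Real.sqrt (π / k) / 2) := by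
  have hk' : k ≠ 0 := hk.ne'
  set H : ℝ → ℝ := fun r =>
    (r ^ 3 / (256 * k ^ 2) - 19 * r / (4608 * k ^ 3)) * Real.exp (-(k * (3 * r) ^ 2))
      + (3 * r ^ 2 / (128 * k ^ 2) - 3 * r ^ 4 / (128 * k) - 19 / (13824 * k ^ 3))
        * Efun k (3 * r) with hH
  have hderiv : ∀ x ∈ Set.Ici (0 : ℝ), HasDerivAt H
      (x ^ 2 / (64 * k ^ 2) * Real.exp (-(k * (3 * x) ^ 2))
        + (3 * x / (64 * k ^ 2) - 3 * x ^ 3 / (32 * k)) * Efun k (3 * x)) x := by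
    intro x _
    have haff : HasDerivAt (fun r : ℝ => 3 * r) 3 x := by
      simpa using (hasDerivAt_id x).const_mul 3
    have hg : HasDerivAt (fun r : ℝ => Real.exp (-(k * (3 * r) ^ 2)))
        (-(2 * k * 3 * (3 * x)) * Real.exp (-(k * (3 * x) ^ 2))) x :=
      hasDerivAt_gauss k haff
    have hE : HasDerivAt (fun r : ℝ => Efun k (3 * r))
        (-3 * Real.exp (-(k * (3 * x) ^ 2))) x := hasDerivAt_E_comp hk haff
    have hp1 : HasDerivAt (fun r : ℝ => r ^ 3 / (256 * k ^ 2) - 19 * r / (4608 * k ^ 3))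
        (3 * x ^ 2 / (256 * k ^ 2) - 19 / (4608 * k ^ 3)) x := by
      have := ((hasDerivAt_pow 3 x).div_const (256 * k ^ 2)).sub
        (((hasDerivAt_id x).const_mul 19).div_const (4608 * k ^ 3))
      refine this.congr_deriv ?_
      push_cast
      ring
    have hp2 : HasDerivAt (fun r : ℝ =>
        3 * r ^ 2 / (128 * k ^ 2) - 3 * r ^ 4 / (128 * k) - 19 / (13824 * k ^ 3))
        (3 * (2 * x) / (128 * k ^ 2) - 3 * (4 * x ^ 3) / (128 * k)) x := by
      have := ((((hasDerivAt_pow 2 x).const_mul 3).div_const (128 * k ^ 2)).sub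
        (((hasDerivAt_pow 4 x).const_mul 3).div_const (128 * k))).sub_const
        (19 / (13824 * k ^ 3))
      refine this.congr_deriv ?_
      push_cast
      ring
    have key := (hp1.mul hg).add (hp2.mul hE)
    refine key.congr_deriv ?_
    field_simp
    ring
  have hpos : ∀ x ∈ Set.Ioi (0 : ℝ),
      0 ≤ x ^ 2 / (64 * k ^ 2) * Real.exp (-(k * (3 * x) ^ 2))
        + (3 * x / (64 * k ^ 2) - 3 * x ^ 3 / (32 * k)) * Efun k (3 * x) := by
    intro x hx
    have hx' : (0 : ℝ) < x := hx
    rw [← stage2 hk hx']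
    exact setIntegral_nonneg measurableSet_Ioi fun y hy => A_nonneg hk hx' hy
  have htend : Tendsto H atTop (𝓝 0) := by
    have g1 := tendsto_gauss 1 (0 : ℝ) hk three_pos
    have g3 := tendsto_gauss 3 (0 : ℝ) hk three_pos
    have e0 := tendsto_Egauss 0 (0 : ℝ) hk three_pos
    have e2 := tendsto_Egauss 2 (0 : ℝ) hk three_pos
    have e4 := tendsto_Egauss 4 (0 : ℝ) hk three_pos
    simp only [pow_zero, pow_one, one_mul, zero_add] at g1 g3 e0 e2 e4
    have comb := ((g3.const_mul (1 / (256 * k ^ 2))).sub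
      (g1.const_mul (19 / (4608 * k ^ 3)))).add
      (((e2.const_mul (3 / (128 * k ^ 2))).sub (e4.const_mul (3 / (128 * k)))).sub
        (e0.const_mul (19 / (13824 * k ^ 3))))
    norm_num at comb
    refine comb.congr fun r => ?_
    rw [hH]
    ring
  have := integral_Ioi_of_hasDerivAt_of_nonneg' hderiv hpos htend
  rw [this, hH]
  beta_reduce
  rw [show (3 : ℝ) * 0 = 0 by ring, E_zero hk]
  norm_num

/-- The triple integral from Lemma `lemma:integral`:
`∫_{r₁=0}^∞ ∫_{r₂=r₁}^∞ ∫_{r₃=r₁+2r₂}^∞ (r₃ − (3/2)r₁ − (3/2)r₂) e^{−nπr₃²} r₁ r₂ r₃`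
equals `19 / (27648 π³ n^{7/2})` for every real `n > 0`. -/
theorem triple_integral_value (n : ℝ) (hn : 0 < n) :
    (∫ r₁ in Set.Ioi (0 : ℝ), ∫ r₂ in Set.Ioi r₁, ∫ r₃ in Set.Ioi (r₁ + 2 * r₂),
        (r₃ - 3 / 2 * r₁ - 3 / 2 * r₂) * Real.exp (-(n * π * r₃ ^ 2)) * (r₁ * r₂ * r₃))
      = 19 / (27648 * π ^ 3 * n ^ ((7 : ℝ) / 2)) := by
  have hπ := Real.pi_pos
  have hn' : n ≠ 0 := hn.ne'
  have hπ' : π ≠ 0 := hπ.ne'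
  set k := n * π with hk_def
  have hk : 0 < k := mul_pos hn hπ
  have h₁ : ∀ r₁ ∈ Set.Ioi (0 : ℝ),
      (∫ r₂ in Set.Ioi r₁, ∫ r₃ in Set.Ioi (r₁ + 2 * r₂),
        (r₃ - 3 / 2 * r₁ - 3 / 2 * r₂) * Real.exp (-(k * r₃ ^ 2)) * (r₁ * r₂ * r₃))
      = r₁ ^ 2 / (64 * k ^ 2) * Real.exp (-(k * (3 * r₁) ^ 2))
        + (3 * r₁ / (64 * k ^ 2) - 3 * r₁ ^ 3 / (32 * k)) * Efun k (3 * r₁) := by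
    intro r₁ hr₁
    rw [setIntegral_congr_fun measurableSet_Ioi fun r₂ hr₂ => stage1 hk hr₁ hr₂]
    exact stage2 hk hr₁
  rw [setIntegral_congr_fun measurableSet_Ioi h₁, stage3 hk]
  have hs : Real.sqrt (π / k) = (Real.sqrt n)⁻¹ := by
    rw [hk_def, show π / (n * π) = n⁻¹ by rw [mul_comm]; field_simp, Real.sqrt_inv]
  have h7 : n ^ ((7 : ℝ) / 2) = n ^ 3 * Real.sqrt n := by
    rw [show ((7 : ℝ) / 2) = ((3 : ℕ) : ℝ) + (1 / 2 : ℝ) by norm_num, Real.rpow_add hn,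
      Real.rpow_natCast, ← Real.sqrt_eq_rpow]
  have hsn : 0 < Real.sqrt n := Real.sqrt_pos.2 hn
  rw [hs, h7, hk_def]
  field_simp
  ring
end

section
/- For every real r₃ > 0, the iterated integral ∫_{r₁=0}^{r₃/(1+√2)} r₁ · ( ∫_{r₂=r₁}^{(r₃²−r₁²)/(2r₃)} r₂ · (r₃ − (1/2)r₁ − (1/2)r₂ − √(r₁²+r₂²)) dr₂ ) dr₁ equals C · r₃⁵, where C = −(1/(1+√2))⁸/(8·48) − (1/(1+√2))⁷/(7·16) − (1/(1+√2))⁶/(6·16) + (1/5)·(1/8 + 1/4 + 1/6 + 2^{3/2}/3)·(1/(1+√2))⁵ − 13·(1/(1+√2))⁴/64 − (1/(1+√2))³/48 + (1/(1+√2))²/32. -/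
open MeasureTheory Real

theorem inner_value (r₃ r₁ : ℝ) (h : 0 < r₃) (h0 : 0 ≤ r₁) (h1 : r₁ ≤ r₃ / (1 + Real.sqrt 2)) :
    (∫ r₂ in r₁..((r₃ ^ 2 - r₁ ^ 2) / (2 * r₃)),
        r₂ * (r₃ - 1 / 2 * r₁ - 1 / 2 * r₂ - Real.sqrt (r₁ ^ 2 + r₂ ^ 2)))
    = (1/16)*r₃^3 - (1/16)*r₁*r₃^2 - (13/16)*r₁^2*r₃
      + (13/24 + 2*Real.sqrt 2/3)*r₁^3 - r₁^4/(16*r₃) - r₁^5/(16*r₃^2) - r₁^6/(48*r₃^3) := by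
  have hs : Real.sqrt 2 ^ 2 = 2 := Real.sq_sqrt (by norm_num)
  have hs0 : (0:ℝ) < Real.sqrt 2 := by positivity
  have h1p : (0:ℝ) < 1 + Real.sqrt 2 := by linarith
  have ha : r₃ / (1 + Real.sqrt 2) = (Real.sqrt 2 - 1) * r₃ := by
    field_simp; linear_combination (-1 : ℝ) * hs
  rw [ha] at h1
  set b := (r₃ ^ 2 - r₁ ^ 2) / (2 * r₃) with hb
  have hle : r₁ ≤ b := by
    rw [hb, le_div_iff₀ (by positivity)]
    nlinarith [mul_nonneg (sub_nonneg.2 h1) (by nlinarith : (0:ℝ) ≤ (Real.sqrt 2 + 1) * r₃ + r₁)]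
  set F : ℝ → ℝ := fun y => (r₃ - 1/2*r₁)*y^2/2 - y^3/6 - Real.sqrt (r₁^2+y^2)^3/3 with hF
  have hcont : ContinuousOn F (Set.Icc r₁ b) := by
    apply Continuous.continuousOn; fun_prop
  have hderiv : ∀ x ∈ Set.Ioo r₁ b, HasDerivAt F
      (x * (r₃ - 1 / 2 * r₁ - 1 / 2 * x - Real.sqrt (r₁ ^ 2 + x ^ 2))) x := by
    intro x hx
    have hxpos : 0 < x := lt_of_le_of_lt h0 hx.1
    have hupos : 0 < r₁^2 + x^2 := by positivity
    have hsq : Real.sqrt (r₁^2 + x^2) ^ 2 = r₁^2 + x^2 := Real.sq_sqrt hupos.le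
    have hsqrtpos : 0 < Real.sqrt (r₁^2 + x^2) := Real.sqrt_pos.2 hupos
    have hinner : HasDerivAt (fun y => r₁^2 + y^2) (2*x) x := by
      simpa using ((hasDerivAt_pow 2 x).const_add (r₁^2))
    have h1' : HasDerivAt (fun y => Real.sqrt (r₁^2+y^2))
        (1 / (2 * Real.sqrt (r₁^2+x^2)) * (2*x)) x :=
      (Real.hasDerivAt_sqrt hupos.ne').comp x hinner
    have h2' := ((h1'.pow 3).div_const 3)
    have h3' := (((hasDerivAt_pow 2 x).const_mul (r₃ - 1/2*r₁)).div_const 2).sub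
        ((hasDerivAt_pow 3 x).div_const 6)
    have hd := h3'.sub h2'
    refine hd.congr_deriv ?_
    symm
    push_cast
    field_simp
    linear_combination (0:ℝ) * hsq
  have hint : IntervalIntegrable
      (fun r₂ => r₂ * (r₃ - 1 / 2 * r₁ - 1 / 2 * r₂ - Real.sqrt (r₁ ^ 2 + r₂ ^ 2)))
      volume r₁ b := by
    apply Continuous.intervalIntegrable; fun_prop
  rw [intervalIntegral.integral_eq_sub_of_hasDerivAt_of_le hle hcont hderiv hint]
  have hsb : r₁^2 + b^2 = ((r₃^2+r₁^2)/(2*r₃))^2 := by rw [hb]; field_simp; ring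
  have e1 : Real.sqrt (r₁^2 + b^2) = (r₃^2+r₁^2)/(2*r₃) := by
    rw [hsb, Real.sqrt_sq (by positivity)]
  have e2 : Real.sqrt (r₁^2 + r₁^2) = Real.sqrt 2 * r₁ := by
    rw [show r₁^2+r₁^2 = 2*r₁^2 by ring, Real.sqrt_mul (by norm_num), Real.sqrt_sq h0]
  rw [hF]
  simp only [e1, e2]
  rw [hb]
  have h32 : (Real.sqrt 2 * r₁)^3 = 2 * Real.sqrt 2 * r₁^3 := by
    rw [mul_pow]; rw [show Real.sqrt 2 ^3 = Real.sqrt 2^2 * Real.sqrt 2 by ring, hs]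
  rw [h32]
  field_simp
  ring

/-- For every real `r₃ > 0`,
`∫_{r₁=0}^{r₃/(1+√2)} r₁ (∫_{r₂=r₁}^{(r₃²−r₁²)/(2r₃)}
    r₂ (r₃ − (1/2)r₁ − (1/2)r₂ − √(r₁²+r₂²)) dr₂) dr₁ = C · r₃⁵`,
where `C` is the explicit constant below. -/
theorem inner_double_integral_value_second (r₃ : ℝ) (h : 0 < r₃) :
    (∫ r₁ in (0 : ℝ)..(r₃ / (1 + Real.sqrt 2)),
        r₁ * ∫ r₂ in r₁..((r₃ ^ 2 - r₁ ^ 2) / (2 * r₃)),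
          r₂ * (r₃ - 1 / 2 * r₁ - 1 / 2 * r₂ - Real.sqrt (r₁ ^ 2 + r₂ ^ 2)))
      = (-(1 / (1 + Real.sqrt 2)) ^ 8 / (8 * 48)
          - (1 / (1 + Real.sqrt 2)) ^ 7 / (7 * 16)
          - (1 / (1 + Real.sqrt 2)) ^ 6 / (6 * 16)
          + 1 / 5 * (1 / 8 + 1 / 4 + 1 / 6 + (2 : ℝ) ^ ((3 : ℝ) / 2) / 3) *
              (1 / (1 + Real.sqrt 2)) ^ 5
          - 13 * (1 / (1 + Real.sqrt 2)) ^ 4 / 64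
          - (1 / (1 + Real.sqrt 2)) ^ 3 / 48
          + (1 / (1 + Real.sqrt 2)) ^ 2 / 32) * r₃ ^ 5 := by
  have hs : Real.sqrt 2 ^ 2 = 2 := Real.sq_sqrt (by norm_num)
  have hs0 : (0:ℝ) < Real.sqrt 2 := by positivity
  have h1p : (0:ℝ) < 1 + Real.sqrt 2 := by linarith
  have ha0 : 0 ≤ r₃ / (1 + Real.sqrt 2) := by positivity
  have h32 : (2:ℝ) ^ ((3:ℝ)/2) = 2 * Real.sqrt 2 := by
    rw [show (3:ℝ)/2 = 1 + 1/2 by norm_num, Real.rpow_add (by norm_num), Real.rpow_one,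
      ← Real.sqrt_eq_rpow]
  have hcong : Set.EqOn
      (fun r₁ => r₁ * ∫ r₂ in r₁..((r₃ ^ 2 - r₁ ^ 2) / (2 * r₃)),
          r₂ * (r₃ - 1 / 2 * r₁ - 1 / 2 * r₂ - Real.sqrt (r₁ ^ 2 + r₂ ^ 2)))
      (fun r₁ => r₁ * ((1/16)*r₃^3 - (1/16)*r₁*r₃^2 - (13/16)*r₁^2*r₃
        + (13/24 + 2*Real.sqrt 2/3)*r₁^3 - r₁^4/(16*r₃) - r₁^5/(16*r₃^2) - r₁^6/(48*r₃^3)))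
      (Set.uIcc (0:ℝ) (r₃ / (1 + Real.sqrt 2))) := by
    intro x hx
    rw [Set.uIcc_of_le ha0] at hx
    simp only
    rw [inner_value r₃ x h hx.1 hx.2]
  rw [intervalIntegral.integral_congr hcong]
  set G : ℝ → ℝ := fun t => (1/32)*r₃^3*t^2 - (1/48)*r₃^2*t^3 - (13/64)*r₃*t^4
      + (13/120 + 2*Real.sqrt 2/15)*t^5 - t^6/(96*r₃) - t^7/(112*r₃^2) - t^8/(384*r₃^3)
    with hG
  have hderiv : ∀ t ∈ Set.uIcc (0:ℝ) (r₃ / (1 + Real.sqrt 2)), HasDerivAt G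
      (t * ((1/16)*r₃^3 - (1/16)*t*r₃^2 - (13/16)*t^2*r₃
        + (13/24 + 2*Real.sqrt 2/3)*t^3 - t^4/(16*r₃) - t^5/(16*r₃^2) - t^6/(48*r₃^3))) t := by
    intro t _
    have hd := (((((((hasDerivAt_pow 2 t).const_mul ((1/32)*r₃^3)).sub
        ((hasDerivAt_pow 3 t).const_mul ((1/48)*r₃^2))).sub
        ((hasDerivAt_pow 4 t).const_mul ((13/64)*r₃))).add
        ((hasDerivAt_pow 5 t).const_mul (13/120 + 2*Real.sqrt 2/15))).sub
        ((hasDerivAt_pow 6 t).div_const (96*r₃))).sub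
        ((hasDerivAt_pow 7 t).div_const (112*r₃^2))).sub
        ((hasDerivAt_pow 8 t).div_const (384*r₃^3))
    refine hd.congr_deriv ?_
    symm
    push_cast
    field_simp
    ring
  have hint : IntervalIntegrable
      (fun t => t * ((1/16)*r₃^3 - (1/16)*t*r₃^2 - (13/16)*t^2*r₃
        + (13/24 + 2*Real.sqrt 2/3)*t^3 - t^4/(16*r₃) - t^5/(16*r₃^2) - t^6/(48*r₃^3)))
      volume 0 (r₃ / (1 + Real.sqrt 2)) := by
    apply Continuous.intervalIntegrable; fun_prop
  rw [intervalIntegral.integral_eq_sub_of_hasDerivAt hderiv hint]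
  have ha : r₃ / (1 + Real.sqrt 2) = (Real.sqrt 2 - 1) * r₃ := by
    field_simp; linear_combination (-1 : ℝ) * hs
  have hu : 1 / (1 + Real.sqrt 2) = Real.sqrt 2 - 1 := by
    field_simp; linear_combination (-1 : ℝ) * hs
  rw [hG, ha, hu, h32]
  simp only
  field_simp
  linear_combination (0:ℝ) * hs
end
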